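/- Let r be a positive integer, ε_r = 2 if r ≡ 0 (mod 3) and ε_r = −1 otherwise, K_{r,n} = −(2^r·ε_r + 1)·J^{(3)}_{rn} + 2^r·J^{(3)}_{r(n−1)}, and S_{r,n} = Σ_{k=0}^{n} J^{(3)}_{rk}. Define the 4×4 rational matrices A_r = [[1,0,0,0],[1, 2^r + ε_r, −(2^r·ε_r + 1), 2^r],[0,1,0,0],[0,0,1,0]] and Q_{r,n} = [[J^{(3)}_r + 2^r·J^{(3)}_{−r}, 0, 0, 0],[S_{r,n}, J^{(3)}_{r(n+1)}, K_{r,n}, 2^r·J^{(3)}_{rn}],[S_{r,n−1}, J^{(3)}_{rn}, K_{r,n−1}, 2^r·J^{(3)}_{r(n−1)}],[S_{r,n−2}, J^{(3)}_{r(n−1)}, K_{r,n−2}, 2^r·J^{(3)}_{r(n−2)}]]. Then for every integer n ≥ 2, J^{(3)}_r · A_r^n + 2^r · J^{(3)}_{−r} · A_r^{n−1} = Q_{r,n}. -/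
import Mathlib

set_option maxHeartbeats 1000000

/-- Third order Jacobsthal numbers on natural indices. -/
def J3fwd : ℕ → ℚ
  | 0 => 0
  | 1 => 1
  | 2 => 1
  | n + 3 => J3fwd (n + 2) + J3fwd (n + 1) + 2 * J3fwd n

/-- The backward extension: `J3bwd n = J^{(3)}_{-n}`. -/
def J3bwd : ℕ → ℚ
  | 0 => 0
  | 1 => 0
  | 2 => 1 / 2
  | n + 3 => (J3bwd n - J3bwd (n + 1) - J3bwd (n + 2)) / 2

/-- Third order Jacobsthal sequence extended to all integers. -/
def J3 : ℤ → ℚ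
  | Int.ofNat n => J3fwd n
  | Int.negSucc n => J3bwd (n + 1)

/-- `ε_r = 2` if `3 ∣ r` and `−1` otherwise. -/
noncomputable def eps (r : ℤ) : ℚ := if (3 : ℤ) ∣ r then 2 else -1

/-- `K_{r,n} = −(2^r ε_r + 1) J_{rn} + 2^r J_{r(n−1)}`. -/
noncomputable def K3 (r n : ℤ) : ℚ :=
  -((2 : ℚ) ^ r * eps r + 1) * J3 (r * n) + (2 : ℚ) ^ r * J3 (r * (n - 1))

/-- `S_{r,n} = Σ_{k=0}^{n} J^{(3)}_{rk}`. -/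
def S3 (r : ℤ) (n : ℕ) : ℚ := ∑ k ∈ Finset.range (n + 1), J3 (r * k)

/-- The 4×4 matrix `A_r`. -/
noncomputable def Amat (r : ℤ) : Matrix (Fin 4) (Fin 4) ℚ :=
  !![1, 0, 0, 0;
     1, (2 : ℚ) ^ r + eps r, -((2 : ℚ) ^ r * eps r + 1), (2 : ℚ) ^ r;
     0, 1, 0, 0;
     0, 0, 1, 0]

/-- The 4×4 matrix `Q_{r,n}` (for `n ≥ 2`). -/
noncomputable def Qmat (r : ℤ) (n : ℕ) : Matrix (Fin 4) (Fin 4) ℚ :=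
  !![J3 r + (2 : ℚ) ^ r * J3 (-r), 0, 0, 0;
     S3 r n, J3 (r * ((n : ℤ) + 1)), K3 r n, (2 : ℚ) ^ r * J3 (r * n);
     S3 r (n - 1), J3 (r * n), K3 r ((n : ℤ) - 1), (2 : ℚ) ^ r * J3 (r * ((n : ℤ) - 1));
     S3 r (n - 2), J3 (r * ((n : ℤ) - 1)), K3 r ((n : ℤ) - 2), (2 : ℚ) ^ r * J3 (r * ((n : ℤ) - 2))]

/-! ### Auxiliary lemmas -/

def cc (m : ℤ) : ℚ := if m % 3 = 0 then -2 else if m % 3 = 1 then 3 else -1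

lemma cc_cases (m : ℤ) :
    (m % 3 = 0 ∧ cc m = -2) ∨ (m % 3 = 1 ∧ cc m = 3) ∨ (m % 3 = 2 ∧ cc m = -1) := by
  have h : m % 3 = 0 ∨ m % 3 = 1 ∨ m % 3 = 2 := by omega
  unfold cc; rcases h with h|h|h <;> simp [h]

lemma fwd (n : ℕ) : 7 * J3fwd n = 2 * 2 ^ n + cc n := by
  induction n using J3fwd.induct with
  | case1 => simp [J3fwd, cc]
  | case2 => norm_num [J3fwd, cc]
  | case3 => norm_num [J3fwd, cc]
  | case4 n iha ihb ihc =>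
    rw [J3fwd]
    have h0 := cc_cases (n : ℤ)
    have h1 := cc_cases ((n : ℤ) + 1)
    have h2 := cc_cases ((n : ℤ) + 2)
    have h3 := cc_cases ((n : ℤ) + 3)
    push_cast at *
    rw [show ((n:ℤ) + 2 + 1) = (n:ℤ) + 3 by ring]
    rcases h0 with ⟨e0,v0⟩|⟨e0,v0⟩|⟨e0,v0⟩ <;> rcases h1 with ⟨e1,v1⟩|⟨e1,v1⟩|⟨e1,v1⟩ <;>
      rcases h2 with ⟨e2,v2⟩|⟨e2,v2⟩|⟨e2,v2⟩ <;> rcases h3 with ⟨e3,v3⟩|⟨e3,v3⟩|⟨e3,v3⟩ <;>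
      first
        | omega
        | (rw [v3]; rw [v0] at ihc; rw [v1] at ihb; rw [v2] at iha;
           simp only [Nat.succ_eq_add_one, pow_succ]; ring_nf; ring_nf at iha ihb ihc; linarith)

lemma bwd (n : ℕ) : 7 * J3bwd n = 2 * (2:ℚ) ^ (-(n:ℤ)) + cc (-(n:ℤ)) := by
  induction n using J3bwd.induct with
  | case1 => simp [J3bwd, cc]
  | case2 => norm_num [J3bwd, cc]
  | case3 => norm_num [J3bwd, cc]
  | case4 n ihc ihb iha =>
    rw [J3bwd]
    have p1 : (2:ℚ) ^ (-((n:ℤ)+1)) = (2:ℚ) ^ (-(n:ℤ)) / 2 := by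
      rw [show -((n:ℤ)+1) = -(n:ℤ) - 1 by ring, zpow_sub₀ (by norm_num : (2:ℚ) ≠ 0), zpow_one]
    have p2 : (2:ℚ) ^ (-((n:ℤ)+2)) = (2:ℚ) ^ (-(n:ℤ)) / 4 := by
      rw [show -((n:ℤ)+2) = -(n:ℤ) - 2 by ring, zpow_sub₀ (by norm_num : (2:ℚ) ≠ 0)]; norm_num
    have p3 : (2:ℚ) ^ (-((n:ℤ)+3)) = (2:ℚ) ^ (-(n:ℤ)) / 8 := by
      rw [show -((n:ℤ)+3) = -(n:ℤ) - 3 by ring, zpow_sub₀ (by norm_num : (2:ℚ) ≠ 0)]; norm_num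
    have h0 := cc_cases (-(n : ℤ))
    have h1 := cc_cases (-((n : ℤ) + 1))
    have h2 := cc_cases (-((n : ℤ) + 2))
    have h3 := cc_cases (-((n : ℤ) + 3))
    push_cast at *
    rw [show (-((n:ℤ) + 3)) = -((n:ℤ)+2) - 1 by ring] at *
    rw [show (-((n:ℤ) + 1)) = -(n:ℤ) - 1 by ring] at *
    rw [show (-((n:ℤ) + 2)) = -(n:ℤ) - 2 by ring] at *
    rw [show (-((n:ℤ) + 2 + 1)) = -(n:ℤ) - 2 - 1 by ring, p3]
    rw [p2] at iha
    rw [p1] at ihb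
    rcases h0 with ⟨e0,v0⟩|⟨e0,v0⟩|⟨e0,v0⟩ <;> rcases h1 with ⟨e1,v1⟩|⟨e1,v1⟩|⟨e1,v1⟩ <;>
      rcases h2 with ⟨e2,v2⟩|⟨e2,v2⟩|⟨e2,v2⟩ <;> rcases h3 with ⟨e3,v3⟩|⟨e3,v3⟩|⟨e3,v3⟩ <;>
      first
        | omega
        | (rw [v3]; rw [v0] at ihc; rw [v1] at ihb; rw [v2] at iha;
           ring_nf; ring_nf at iha ihb ihc; linarith)

lemma J3_closed (m : ℤ) : J3 m = (2 * (2:ℚ) ^ m + cc m) / 7 := by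
  cases m with
  | ofNat k =>
    have h := fwd k
    show J3fwd k = _
    rw [show ((Int.ofNat k : ℤ)) = ((k:ℕ) : ℤ) from rfl, zpow_natCast]
    linarith
  | negSucc k =>
    have h := bwd (k + 1)
    show J3bwd (k + 1) = _
    rw [show ((Int.negSucc k : ℤ)) = -(((k+1:ℕ)):ℤ) from by rw [Int.negSucc_eq]; push_cast; ring]
    linarith

lemma two_zpow_ne (m : ℤ) : (2:ℚ) ^ m ≠ 0 := zpow_ne_zero _ two_ne_zero

lemma eps_cases (r : ℤ) : (r % 3 = 0 ∧ eps r = 2) ∨ (r % 3 ≠ 0 ∧ eps r = -1) := by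
  by_cases h : (3:ℤ) ∣ r
  · exact Or.inl ⟨Int.emod_eq_zero_of_dvd h, by simp [eps, h]⟩
  · exact Or.inr ⟨fun hc => h (Int.dvd_of_emod_eq_zero hc), by simp [eps, h]⟩

lemma J3_rec (r m : ℤ) :
    J3 (r*(m+1)) = ((2:ℚ)^r + eps r) * J3 (r*m)
      - ((2:ℚ)^r * eps r + 1) * J3 (r*(m-1)) + (2:ℚ)^r * J3 (r*(m-2)) := by
  have a1 : r*(m+1) = r*m + r := by ring
  have a2 : r*(m-1) = r*m - r := by ring
  have a3 : r*(m-2) = r*m - 2*r := by ring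
  have e1 : (2:ℚ)^(r*(m+1)) = (2:ℚ)^(r*m) * (2:ℚ)^r := by
    rw [a1, zpow_add₀ (two_ne_zero)]
  have e2 : (2:ℚ)^(r*(m-1)) = (2:ℚ)^(r*m) / (2:ℚ)^r := by
    rw [a2, zpow_sub₀ (two_ne_zero)]
  have e3 : (2:ℚ)^(r*(m-2)) = (2:ℚ)^(r*m) / ((2:ℚ)^r * (2:ℚ)^r) := by
    rw [a3, show 2*r = r + r by ring, zpow_sub₀ (two_ne_zero), zpow_add₀ (two_ne_zero)]
  have h0 := cc_cases (r*m)
  have h1 := cc_cases (r*(m+1))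
  have h2 := cc_cases (r*(m-1))
  have h3 := cc_cases (r*(m-2))
  have he := eps_cases r
  rw [J3_closed (r*(m+1)), J3_closed (r*m), J3_closed (r*(m-1)), J3_closed (r*(m-2)),
    e1, e2, e3]
  rcases he with ⟨er,ve⟩|⟨er,ve⟩ <;> rw [ve] <;>
  rcases h0 with ⟨e0,v0⟩|⟨e0,v0⟩|⟨e0,v0⟩ <;> rcases h1 with ⟨e1',v1⟩|⟨e1',v1⟩|⟨e1',v1⟩ <;>
    rcases h2 with ⟨e2',v2⟩|⟨e2',v2⟩|⟨e2',v2⟩ <;> rcases h3 with ⟨e3',v3⟩|⟨e3',v3⟩|⟨e3',v3⟩ <;>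
    first
      | omega
      | (rw [v0, v1, v2, v3]; field_simp; ring)

lemma J3_zero : J3 0 = 0 := rfl

lemma S3_succ (r : ℤ) (n : ℕ) : S3 r (n+1) = S3 r n + J3 (r * (n+1)) := by
  unfold S3
  rw [Finset.sum_range_succ]
  push_cast
  ring_nf

lemma S3_rec (r : ℤ) (n : ℕ) (hn : 2 ≤ n) :
    S3 r (n+1) = (J3 r + (2:ℚ)^r * J3 (-r)) + ((2:ℚ)^r + eps r) * S3 r n
      - ((2:ℚ)^r * eps r + 1) * S3 r (n-1) + (2:ℚ)^r * S3 r (n-2) := by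
  induction n, hn using Nat.le_induction with
  | base =>
    have R1 := J3_rec r 1
    have R2 := J3_rec r 2
    rw [show r*((1:ℤ)+1) = r*2 by ring, show r*((1:ℤ)-1) = 0 by ring,
      show r*((1:ℤ)-2) = -r by ring, show r*(1:ℤ) = r by ring] at R1
    rw [show r*((2:ℤ)+1) = r*3 by ring, show r*((2:ℤ)-1) = r by ring,
      show r*((2:ℤ)-2) = 0 by ring] at R2
    show S3 r 3 = _
    unfold S3
    simp [Finset.sum_range_succ, J3_zero]
    have hz : J3 0 = 0 := rfl
    linear_combination R2 + R1 + ((2:ℚ)^r - ((2:ℚ)^r * eps r + 1)) * hz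
  | succ n hn ih =>
    have hn1 : n - 1 + 1 = n := by omega
    have hn2 : n - 2 + 1 = n - 1 := by omega
    have Sn : S3 r n = S3 r (n-1) + J3 (r * n) := by
      conv_lhs => rw [← hn1]
      rw [S3_succ, show ((n-1:ℕ):ℤ) + 1 = (n:ℤ) by omega]
    have Sn1 : S3 r (n-1) = S3 r (n-2) + J3 (r * ((n:ℤ)-1)) := by
      conv_lhs => rw [← hn2]
      rw [S3_succ]
      rw [show ((n-2 : ℕ):ℤ) + 1 = (n:ℤ) - 1 by omega]
    have R := J3_rec r ((n:ℤ)+1)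
    rw [show r*((n:ℤ)+1+1) = r*((n:ℤ)+2) by ring, show r*((n:ℤ)+1-1) = r*(n:ℤ) by ring,
      show r*((n:ℤ)+1-2) = r*((n:ℤ)-1) by ring] at R
    rw [S3_succ r (n+1), S3_succ r n]
    rw [show (n+1:ℕ)-1 = n by omega, show (n+1:ℕ)-2 = n-1 by omega]
    push_cast
    push_cast at ih
    rw [show r*((n:ℤ)+1+1) = r*((n:ℤ)+2) by ring]
    linear_combination ih - S3_succ r n + R + ((2:ℚ)^r * eps r + 1) * Sn - (2:ℚ)^r * Sn1

lemma AQ (r : ℤ) (n : ℕ) (hn : 2 ≤ n) : Amat r * Qmat r n = Qmat r (n+1) := by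
  have Ra := J3_rec r (n:ℤ)
  have Rb := J3_rec r ((n:ℤ)-1)
  rw [show r*((n:ℤ)-1+1) = r*(n:ℤ) by ring, show r*((n:ℤ)-1-1) = r*((n:ℤ)-2) by ring,
    show r*((n:ℤ)-1-2) = r*((n:ℤ)-3) by ring] at Rb
  have Rc := J3_rec r ((n:ℤ)+1)
  rw [show r*((n:ℤ)+1-1) = r*(n:ℤ) by ring,
    show r*((n:ℤ)+1-2) = r*((n:ℤ)-1) by ring] at Rc
  ext i j
  fin_cases i <;> fin_cases j <;>
    simp [Amat, Qmat, Matrix.mul_apply, Fin.sum_univ_four] <;>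
    first
      | linear_combination -S3_rec r n hn
      | linear_combination -Rc
      | (simp only [K3];
         rw [show ((n:ℤ)+1-1) = (n:ℤ) by ring, show ((n:ℤ)-1-1) = (n:ℤ)-2 by ring,
           show ((n:ℤ)-2-1) = (n:ℤ)-3 by ring];
         linear_combination ((2:ℚ)^r * eps r + 1) * Ra - (2:ℚ)^r * Rb)
      | linear_combination -(2:ℚ)^r * Ra
      | (rw [show ((n:ℤ)+1-2) = (n:ℤ)-1 by ring]; exact Or.inl rfl)
      | (rw [show ((n:ℤ)+1-2) = (n:ℤ)-1 by ring])

theorem third_order_jacobsthal_sum_matrix_identity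
    (r : ℤ) (hr : 1 ≤ r) (n : ℕ) (hn : 2 ≤ n) :
    J3 r • (Amat r) ^ n + ((2 : ℚ) ^ r * J3 (-r)) • (Amat r) ^ (n - 1) =
      Qmat r n := by
  induction n, hn using Nat.le_induction with
  | base =>
    have R1 := J3_rec r 1
    rw [show r*((1:ℤ)+1) = r*2 by ring, show r*((1:ℤ)-1) = 0 by ring,
      show r*((1:ℤ)-2) = -r by ring, show r*(1:ℤ) = r by ring] at R1
    have R2 := J3_rec r 2
    rw [show r*((2:ℤ)+1) = r*3 by ring, show r*((2:ℤ)-1) = r by ring,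
      show r*((2:ℤ)-2) = 0 by ring] at R2
    have hz : J3 0 = 0 := rfl
    rw [hz] at R1 R2
    rw [show (2:ℕ)-1 = 1 from rfl, pow_two, pow_one]
    ext i j
    fin_cases i <;> fin_cases j <;>
      simp [Amat, Qmat, Matrix.mul_apply, Fin.sum_univ_four, K3, S3,
        Finset.sum_range_succ, J3_zero, Matrix.vecHead, Matrix.vecTail] <;>
      first
        | ring1
        | linear_combination R1
        | linear_combination -R1
        | linear_combination R2
        | linear_combination -R2
        | linear_combination -R2 - ((2:ℚ)^r + eps r) * R1
        | linear_combination R2 + ((2:ℚ)^r + eps r) * R1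
        | linear_combination ((2:ℚ)^r * eps r + 1) * R1
        | linear_combination -((2:ℚ)^r * eps r + 1) * R1
        | linear_combination (2:ℚ)^r * R1
        | linear_combination -(2:ℚ)^r * R1
  | succ n hn ih =>
    have key : J3 r • (Amat r)^(n+1) + ((2:ℚ)^r * J3 (-r)) • (Amat r)^n
        = Amat r * (J3 r • (Amat r)^n + ((2:ℚ)^r * J3 (-r)) • (Amat r)^(n-1)) := by
      rw [Matrix.mul_add, Matrix.mul_smul, Matrix.mul_smul, ← pow_succ', ← pow_succ',
        show n - 1 + 1 = n by omega]
    rw [Nat.add_sub_cancel, key, ih, AQ r n hn]
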